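/- arXiv:2504.00165 — 3 statements merged into one kernel-verified Lean document; each statement's English description precedes it below -/
import Mathlib

section
/- Let a < b be reals, 𝓘 = [a,b], let ϕ : 𝓘 → ℝ^μ and h : 𝓘 → ℝ^ϰ be measurable with square-integrable components, g(τ) = [ϕ(τ); h(τ)] ∈ ℝ^κ (κ = μ + ϰ), and assume 𝔥 = ∫_𝓘 h hᵀ dτ and 𝔈 = ∫_𝓘 ϕϕᵀ dτ − Γ 𝔥⁻¹ Γᵀ are positive definite, where Γ = ∫_𝓘 ϕ hᵀ dτ. Let ε(τ) = ϕ(τ) − Γ 𝔥⁻¹ h(τ), Γ̂ = [Γ 𝔥⁻¹; I_ϰ], Ĩ = [I_μ; O_{ϰ,μ}], T = Γ̂ √𝔥 ∈ ℝ^{κ×ϰ} and T̃ = Ĩ √𝔈 ∈ ℝ^{κ×μ}, where √· denotes the positive-definite matrix square root. Then for any matrices ∈ ℝ^{n×κn}, B̂ ∈ ℝ^{n×κp}, K ∈ ℝ^{p×n} and every τ ∈ 𝓘: [Â + B̂ (I_κ ⊗ K)] (g(τ) ⊗ I_n) = [Â (T ⊗ I_n) + B̂ (T ⊗ K)] (√𝔥⁻¹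 h(τ) ⊗ I_n) + [Â (T̃ ⊗ I_n) + B̂ (T̃ ⊗ K)] (√𝔈⁻¹ ε(τ) ⊗ I_n). -/
open MeasureTheory Matrix Classical
open scoped Kronecker

/-- The Kronecker product `g ⊗ I_n` of a column vector `g ∈ ℝ^κ`
(indexed by `κI`) with the `n × n` identity matrix. -/
noncomputable def vecKronId {κI : Type*} (g : κI → ℝ) (n : ℕ) :
    Matrix (κI × Fin n) (Fin n) ℝ :=
  fun ki j => g ki.1 * (1 : Matrix (Fin n) (Fin n) ℝ) ki.2 j

/-- The entrywise (cross-)Gram integral `∫_{[a,b]} ϕ(τ) h(τ)ᵀ dτ`. -/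
noncomputable def gramOn {μI ϰI : Type*} (a b : ℝ) (ϕ : ℝ → μI → ℝ) (h : ℝ → ϰI → ℝ) :
    Matrix μI ϰI ℝ :=
  fun i j => ∫ τ in Set.Icc a b, ϕ τ i * h τ j

/-- The positive semidefinite square root `√X` of a positive semidefinite
real matrix (junk value `0` if `X` is not positive semidefinite). -/
noncomputable def psdSqrt {m : Type*} [Fintype m] [DecidableEq m] (X : Matrix m m ℝ) :
    Matrix m m ℝ :=
  if hX : X.PosSemidef then
    (hX.1.eigenvectorUnitary : Matrix m m ℝ) * diagonal ((↑) ∘ Real.sqrt ∘ hX.1.eigenvalues) *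
      (star hX.1.eigenvectorUnitary : Matrix m m ℝ)
  else 0

/-!
The stacked vector `g = [ϕ; h]` splits as `Γ̂ h + Ĩ ε`, and because `√𝔥` and `√𝔈` are invertible,
`T (√𝔥⁻¹ h) = Γ̂ h` and `T̃ (√𝔈⁻¹ ε) = Ĩ ε`. The identity then follows from the mixed-product rule
`(M ⊗ N) (v ⊗ N') = (M v) ⊗ (N N')`, applied blockwise to `Â (M ⊗ Iₙ) + B̂ (M ⊗ K)`.
-/

theorem isUnit_psdSqrt {m : Type*} [Fintype m] [DecidableEq m] {X : Matrix m m ℝ}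
    (hX : X.PosDef) : IsUnit (psdSqrt X) := by
  rw [psdSqrt, dif_pos hX.posSemidef]
  refine (Unitary.isUnit_coe.mul ?_).mul Unitary.isUnit_coe.star
  rw [isUnit_diagonal, Pi.isUnit_iff]
  exact fun i => (Real.sqrt_pos.mpr (hX.eigenvalues_pos i)).ne'.isUnit

theorem mul_mulVec_inv_mulVec {R m k : Type*} [CommRing R] [Fintype m] [DecidableEq m]
    (G : Matrix k m R) {S : Matrix m m R} (hS : IsUnit S) (x : m → R) :
    (G * S) *ᵥ (S⁻¹ *ᵥ x) = G *ᵥ x := by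
  rw [mulVec_mulVec, mul_nonsing_inv_cancel_right _ _ ((isUnit_iff_isUnit_det S).mp hS)]

def vecKron {R α q n : Type*} [Mul R] (v : α → R) (N : Matrix q n R) : Matrix (α × q) n R :=
  fun ir j => v ir.1 * N ir.2 j

theorem vecKronId_eq_vecKron {α : Type*} (v : α → ℝ) (n : ℕ) :
    vecKronId v n = vecKron v 1 := rfl

theorem vecKron_add {R α q n : Type*} [Mul R] [Add R] [RightDistribClass R]
    (v w : α → R) (N : Matrix q n R) :
    vecKron (v + w) N = vecKron v N + vecKron w N := by
  ext
  exact add_mul _ _ _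

theorem kronecker_mul_vecKron {R α β q r n : Type*} [CommSemiring R] [Fintype β] [Fintype r]
    (M : Matrix α β R) (N : Matrix q r R) (v : β → R) (N' : Matrix r n R) :
    (M ⊗ₖ N) * vecKron v N' = vecKron (M *ᵥ v) (N * N') := by
  ext ⟨i, k⟩ j
  simp only [mul_apply, vecKron, kroneckerMap_apply, mulVec, dotProduct, Fintype.sum_prod_type,
    Finset.sum_mul, Finset.mul_sum]
  rw [Finset.sum_comm]
  exact Finset.sum_congr rfl fun _ _ => Finset.sum_congr rfl fun _ _ => by ring

theorem sum_elim_eq_fromRows_mulVec_add {R m k : Type*} [CommRing R] [Fintype m] [Fintype k]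
    [DecidableEq m] [DecidableEq k]
    (C : Matrix m k R) (x : m → R) (y : k → R) :
    Sum.elim x y = fromRows C 1 *ᵥ y + fromRows (1 : Matrix m m R) 0 *ᵥ (x - C *ᵥ y) := by
  simp only [fromRows_mulVec, one_mulVec, zero_mulVec]
  ext (i | i) <;> simp

theorem mul_kronecker_add_mul_kronecker_mul_vecKronId {α β m p : Type*} [Fintype α] [DecidableEq α]
    [Fintype β] [Fintype p] {n : ℕ}
    (A : Matrix m (α × Fin n) ℝ) (B : Matrix m (α × p) ℝ) (K : Matrix p (Fin n) ℝ)
    (M : Matrix α β ℝ) (v : β → ℝ) :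
    (A * (M ⊗ₖ (1 : Matrix (Fin n) (Fin n) ℝ)) + B * (M ⊗ₖ K)) * vecKronId v n =
      (A + B * ((1 : Matrix α α ℝ) ⊗ₖ K)) * vecKronId (M *ᵥ v) n := by
  rw [vecKronId_eq_vecKron, vecKronId_eq_vecKron, Matrix.add_mul, Matrix.add_mul,
    Matrix.mul_assoc, Matrix.mul_assoc, Matrix.mul_assoc, kronecker_mul_vecKron,
    kronecker_mul_vecKron, kronecker_mul_vecKron, one_mulVec, Matrix.mul_one]

theorem ksd_delay_kernel_factorization_general
    (μ ϰ n p : ℕ) (a b : ℝ)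
    (ϕ : ℝ → Fin μ → ℝ) (h : ℝ → Fin ϰ → ℝ)
    (𝔥 : Matrix (Fin ϰ) (Fin ϰ) ℝ) (h𝔥pd : 𝔥.PosDef)
    (Γ : Matrix (Fin μ) (Fin ϰ) ℝ)
    (𝔈 : Matrix (Fin μ) (Fin μ) ℝ) (h𝔈pd : 𝔈.PosDef)
    (ε : ℝ → Fin μ → ℝ) (hε : ∀ τ, ε τ = ϕ τ - (Γ * 𝔥⁻¹) *ᵥ h τ)
    (Γhat : Matrix (Fin μ ⊕ Fin ϰ) (Fin ϰ) ℝ)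
    (hΓhat : Γhat = Matrix.fromRows (Γ * 𝔥⁻¹) (1 : Matrix (Fin ϰ) (Fin ϰ) ℝ))
    (Itil : Matrix (Fin μ ⊕ Fin ϰ) (Fin μ) ℝ)
    (hItil : Itil = Matrix.fromRows (1 : Matrix (Fin μ) (Fin μ) ℝ) (0 : Matrix (Fin ϰ) (Fin μ) ℝ))
    (T : Matrix (Fin μ ⊕ Fin ϰ) (Fin ϰ) ℝ) (hT : T = Γhat * psdSqrt 𝔥)
    (Ttil : Matrix (Fin μ ⊕ Fin ϰ) (Fin μ) ℝ) (hTtil : Ttil = Itil * psdSqrt 𝔈)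
    (Ahat : Matrix (Fin n) ((Fin μ ⊕ Fin ϰ) × Fin n) ℝ)
    (Bhat : Matrix (Fin n) ((Fin μ ⊕ Fin ϰ) × Fin p) ℝ)
    (K : Matrix (Fin p) (Fin n) ℝ) :
    ∀ τ ∈ Set.Icc a b,
      (Ahat + Bhat * ((1 : Matrix (Fin μ ⊕ Fin ϰ) (Fin μ ⊕ Fin ϰ) ℝ) ⊗ₖ K)) *
          vecKronId (Sum.elim (ϕ τ) (h τ)) n =
        (Ahat * (T ⊗ₖ (1 : Matrix (Fin n) (Fin n) ℝ)) + Bhat * (T ⊗ₖ K)) *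
            vecKronId ((psdSqrt 𝔥)⁻¹ *ᵥ h τ) n +
          (Ahat * (Ttil ⊗ₖ (1 : Matrix (Fin n) (Fin n) ℝ)) + Bhat * (Ttil ⊗ₖ K)) *
            vecKronId ((psdSqrt 𝔈)⁻¹ *ᵥ ε τ) n := by
  intro τ _
  have hg : Sum.elim (ϕ τ) (h τ) = Γhat *ᵥ h τ + Itil *ᵥ ε τ := by
    rw [hΓhat, hItil, hε]
    exact sum_elim_eq_fromRows_mulVec_add _ _ _
  rw [mul_kronecker_add_mul_kronecker_mul_vecKronId,
    mul_kronecker_add_mul_kronecker_mul_vecKronId, hT, hTtil,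
    mul_mulVec_inv_mulVec _ (isUnit_psdSqrt h𝔥pd), mul_mulVec_inv_mulVec _ (isUnit_psdSqrt h𝔈pd),
    ← Matrix.mul_add, vecKronId_eq_vecKron, vecKronId_eq_vecKron, vecKronId_eq_vecKron,
    ← vecKron_add, hg]

/-- **identity (17) of the paper.** With `T = Γ̂ √𝔥` and
`T̃ = Ĩ √𝔈`, for any `Â, B̂, K` and every `τ ∈ [a,b]`:
`[Â + B̂ (I_κ ⊗ K)] (g(τ) ⊗ Iₙ)
  = [Â (T ⊗ Iₙ) + B̂ (T ⊗ K)] (√𝔥⁻¹ h(τ) ⊗ Iₙ)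
  + [Â (T̃ ⊗ Iₙ) + B̂ (T̃ ⊗ K)] (√𝔈⁻¹ ε(τ) ⊗ Iₙ)`. -/
theorem ksd_delay_kernel_factorization
    (μ ϰ n p : ℕ) (a b : ℝ) (hab : a < b)
    (ϕ : ℝ → Fin μ → ℝ) (h : ℝ → Fin ϰ → ℝ)
    (hϕmeas : ∀ i, Measurable fun τ => ϕ τ i)
    (hhmeas : ∀ i, Measurable fun τ => h τ i)
    (hϕL2 : ∀ i, MemLp (fun τ => ϕ τ i) 2 (volume.restrict (Set.Icc a b)))
    (hhL2 : ∀ i, MemLp (fun τ => h τ i) 2 (volume.restrict (Set.Icc a b)))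
    (𝔥 : Matrix (Fin ϰ) (Fin ϰ) ℝ) (h𝔥 : 𝔥 = gramOn a b h h) (h𝔥pd : 𝔥.PosDef)
    (Γ : Matrix (Fin μ) (Fin ϰ) ℝ) (hΓ : Γ = gramOn a b ϕ h)
    (𝔈 : Matrix (Fin μ) (Fin μ) ℝ)
    (h𝔈 : 𝔈 = gramOn a b ϕ ϕ - Γ * 𝔥⁻¹ * Γᵀ) (h𝔈pd : 𝔈.PosDef)
    (ε : ℝ → Fin μ → ℝ) (hε : ∀ τ, ε τ = ϕ τ - (Γ * 𝔥⁻¹) *ᵥ h τ)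
    (Γhat : Matrix (Fin μ ⊕ Fin ϰ) (Fin ϰ) ℝ)
    (hΓhat : Γhat = Matrix.fromRows (Γ * 𝔥⁻¹) (1 : Matrix (Fin ϰ) (Fin ϰ) ℝ))
    (Itil : Matrix (Fin μ ⊕ Fin ϰ) (Fin μ) ℝ)
    (hItil : Itil = Matrix.fromRows (1 : Matrix (Fin μ) (Fin μ) ℝ) (0 : Matrix (Fin ϰ) (Fin μ) ℝ))
    (T : Matrix (Fin μ ⊕ Fin ϰ) (Fin ϰ) ℝ) (hT : T = Γhat * psdSqrt 𝔥)
    (Ttil : Matrix (Fin μ ⊕ Fin ϰ) (Fin μ) ℝ) (hTtil : Ttil = Itil * psdSqrt 𝔈)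
    (Ahat : Matrix (Fin n) ((Fin μ ⊕ Fin ϰ) × Fin n) ℝ)
    (Bhat : Matrix (Fin n) ((Fin μ ⊕ Fin ϰ) × Fin p) ℝ)
    (K : Matrix (Fin p) (Fin n) ℝ) :
    ∀ τ ∈ Set.Icc a b,
      (Ahat + Bhat * ((1 : Matrix (Fin μ ⊕ Fin ϰ) (Fin μ ⊕ Fin ϰ) ℝ) ⊗ₖ K)) *
          vecKronId (Sum.elim (ϕ τ) (h τ)) n =
        (Ahat * (T ⊗ₖ (1 : Matrix (Fin n) (Fin n) ℝ)) + Bhat * (T ⊗ₖ K)) *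
            vecKronId ((psdSqrt 𝔥)⁻¹ *ᵥ h τ) n +
          (Ahat * (Ttil ⊗ₖ (1 : Matrix (Fin n) (Fin n) ℝ)) + Bhat * (Ttil ⊗ₖ K)) *
            vecKronId ((psdSqrt 𝔈)⁻¹ *ᵥ ε τ) n :=
  ksd_delay_kernel_factorization_general μ ϰ n p a b ϕ h 𝔥 h𝔥pd Γ 𝔈 h𝔈pd ε hε Γhat hΓhat Itil hItil
    T hT Ttil hTtil Ahat Bhat K
end

section
/- Let P, P̃, N, Ñ ∈ ℝ^{n×k} be real matrices and let Z ∈ ℝ^{n×n} be symmetric positive definite. Define Sy(X) = X + Xᵀ. Then Sy(PᵀN) ⪯ Sy(P̃ᵀN + PᵀÑ − P̃ᵀÑ) + (P − P̃)ᵀ Z (P − P̃) + (N − Ñ)ᵀ Z⁻¹ (N − Ñ), i.e., the difference of the right-hand side and the left-hand side is a positive semidefinite k × k matrix. -/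
open Matrix

namespace Matrix.PosDef

variable {K m n : Type*} [Field K] [PartialOrder K] [StarRing K] [Fintype n] [DecidableEq n]
  {Z : Matrix n n K}

theorem conjTranspose_sub_mul_inv_mul_sub (hZ : Z.PosDef) (X Y : Matrix n m K) :
    (Z * X - Y)ᴴ * Z⁻¹ * (Z * X - Y) = Xᴴ * Z * X + Yᴴ * Z⁻¹ * Y - (Xᴴ * Y + Yᴴ * X) := by
  have hZ' : IsUnit Z.det := (isUnit_iff_isUnit_det Z).mp hZ.isUnit
  rw [conjTranspose_sub, conjTranspose_mul, hZ.isHermitian.eq]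
  simp only [Matrix.sub_mul, Matrix.mul_sub, Matrix.mul_assoc,
    mul_nonsing_inv_cancel_left _ _ hZ', nonsing_inv_mul_cancel_left _ _ hZ']
  abel

/-- The matrix form of `2xy ≤ z x² + y² / z`. -/
theorem posSemidef_young [Finite m] (hZ : Z.PosDef) (X Y : Matrix n m K) :
    (Xᴴ * Z * X + Yᴴ * Z⁻¹ * Y - (Xᴴ * Y + Yᴴ * X)).PosSemidef := by
  rw [← hZ.conjTranspose_sub_mul_inv_mul_sub]
  exact hZ.inv.posSemidef.conjTranspose_mul_mul_same _

end Matrix.PosDef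

/-- **inner convex approximation bound.** For any matrices
`P, P̃, N, Ñ ∈ ℝ^{n×k}` and `Z ≻ 0`, with `Sy(X) = X + Xᵀ`:
`Sy(PᵀN) ⪯ Sy(P̃ᵀN + PᵀÑ − P̃ᵀÑ) + (P−P̃)ᵀ Z (P−P̃) + (N−Ñ)ᵀ Z⁻¹ (N−Ñ)`. -/
theorem inner_convex_approximation_bound
    (n k : ℕ) (P Ptil N Ntil : Matrix (Fin n) (Fin k) ℝ)
    (Z : Matrix (Fin n) (Fin n) ℝ) (hZ : Z.PosDef) :
    (((Ptilᵀ * N + Pᵀ * Ntil - Ptilᵀ * Ntil) +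
        (Ptilᵀ * N + Pᵀ * Ntil - Ptilᵀ * Ntil)ᵀ) +
      (P - Ptil)ᵀ * Z * (P - Ptil) + (N - Ntil)ᵀ * Z⁻¹ * (N - Ntil) -
      (Pᵀ * N + (Pᵀ * N)ᵀ)).PosSemidef := by
  -- `Pᵀ N = P̃ᵀ N + Pᵀ Ñ - P̃ᵀ Ñ + (P - P̃)ᵀ (N - Ñ)`
  have expand : ((Ptilᵀ * N + Pᵀ * Ntil - Ptilᵀ * Ntil) +
        (Ptilᵀ * N + Pᵀ * Ntil - Ptilᵀ * Ntil)ᵀ) +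
      (P - Ptil)ᵀ * Z * (P - Ptil) + (N - Ntil)ᵀ * Z⁻¹ * (N - Ntil) - (Pᵀ * N + (Pᵀ * N)ᵀ) =
      (P - Ptil)ᵀ * Z * (P - Ptil) + (N - Ntil)ᵀ * Z⁻¹ * (N - Ntil) -
        ((P - Ptil)ᵀ * (N - Ntil) + (N - Ntil)ᵀ * (P - Ptil)) := by
    simp only [Matrix.sub_mul, Matrix.mul_sub, transpose_sub, transpose_add, transpose_mul,
      transpose_transpose]
    abel
  rw [expand]
  simpa only [conjTranspose_eq_transpose_of_trivial] using
    hZ.posSemidef_young (P - Ptil) (N - Ntil)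
end

section
/- Let Φ ∈ ℝ^{k×k} be symmetric, let P, P̃, N, Ñ ∈ ℝ^{n×k}, and let Z ∈ ℝ^{n×n} be symmetric positive definite. If Φ + Sy(P̃ᵀN + PᵀÑ − P̃ᵀÑ) + (P − P̃)ᵀ Z (P − P̃) + (N − Ñ)ᵀ Z⁻¹ (N − Ñ) ≺ 0 (negative definite), then Φ + Sy(PᵀN) ≺ 0. -/
/-!
With `ΔP = P - P̃` and `ΔN = N - Ñ` one has `PᵀN = (P̃ᵀN + PᵀÑ - P̃ᵀÑ) + ΔPᵀΔN`, so the
two matrix inequalities differ by `ΔPᵀ Z ΔP + ΔNᵀ Z⁻¹ ΔN - Sy(ΔPᵀΔN)`. This is a matrix form of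
Young's inequality: completing the square, it equals `(ΔP - Z⁻¹ΔN)ᵀ Z (ΔP - Z⁻¹ΔN) ⪰ 0`.
-/

open Matrix

namespace Matrix

variable {m n : Type*} [Fintype m]

theorem PosDef.posSemidef_young_s15 [DecidableEq m] [Fintype n] {K : Type*} [Field K]
    [PartialOrder K] [StarRing K] [StarOrderedRing K] {Z : Matrix m m K} (hZ : Z.PosDef)
    (A B : Matrix m n K) :
    (Aᴴ * Z * A + Bᴴ * Z⁻¹ * B - (Aᴴ * B + Bᴴ * A)).PosSemidef := by
  have hdet : IsUnit Z.det := (isUnit_iff_isUnit_det Z).mp hZ.isUnit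
  have hsquare : Aᴴ * Z * A + Bᴴ * Z⁻¹ * B - (Aᴴ * B + Bᴴ * A) =
      (A - Z⁻¹ * B)ᴴ * Z * (A - Z⁻¹ * B) := by
    simp only [conjTranspose_sub, conjTranspose_mul, hZ.isHermitian.inv.eq, Matrix.sub_mul,
      Matrix.mul_sub, Matrix.mul_assoc, mul_nonsing_inv_cancel_left _ _ hdet,
      nonsing_inv_mul_cancel_left _ _ hdet]
    abel
  rw [hsquare]
  exact hZ.posSemidef.conjTranspose_mul_mul_same _

theorem transpose_mul_eq_linearization_add {R : Type*} [CommRing R] (P P₀ N N₀ : Matrix m n R) :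
    Pᵀ * N = (P₀ᵀ * N + Pᵀ * N₀ - P₀ᵀ * N₀) + (P - P₀)ᵀ * (N - N₀) := by
  simp only [transpose_sub, Matrix.sub_mul, Matrix.mul_sub]
  abel

end Matrix

theorem convexified_implies_bmi_general
    (n k : ℕ) (Φ : Matrix (Fin k) (Fin k) ℝ)
    (P Ptil N Ntil : Matrix (Fin n) (Fin k) ℝ)
    (Z : Matrix (Fin n) (Fin n) ℝ) (hZ : Z.PosDef)
    (hyp : (-(Φ + ((Ptilᵀ * N + Pᵀ * Ntil - Ptilᵀ * Ntil) +
          (Ptilᵀ * N + Pᵀ * Ntil - Ptilᵀ * Ntil)ᵀ) +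
        (P - Ptil)ᵀ * Z * (P - Ptil) + (N - Ntil)ᵀ * Z⁻¹ * (N - Ntil))).PosDef) :
    (-(Φ + (Pᵀ * N + (Pᵀ * N)ᵀ))).PosDef := by
  have hslack := hZ.posSemidef_young_s15 (P - Ptil) (N - Ntil)
  simp only [conjTranspose_eq_transpose_of_trivial] at hslack
  convert hyp.add_posSemidef hslack using 1
  rw [transpose_mul_eq_linearization_add P Ptil N Ntil]
  simp only [transpose_add, transpose_mul, transpose_transpose]
  abel

/-- **the convexified inequality implies the BMI.** If `Φ` is
symmetric, `Z ≻ 0`, and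
`Φ + Sy(P̃ᵀN + PᵀÑ − P̃ᵀÑ) + (P−P̃)ᵀ Z (P−P̃) + (N−Ñ)ᵀ Z⁻¹ (N−Ñ) ≺ 0`,
then `Φ + Sy(PᵀN) ≺ 0`. -/
theorem convexified_implies_bmi
    (n k : ℕ) (Φ : Matrix (Fin k) (Fin k) ℝ) (hΦ : Φ.IsHermitian)
    (P Ptil N Ntil : Matrix (Fin n) (Fin k) ℝ)
    (Z : Matrix (Fin n) (Fin n) ℝ) (hZ : Z.PosDef)
    (hyp : (-(Φ + ((Ptilᵀ * N + Pᵀ * Ntil - Ptilᵀ * Ntil) +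
          (Ptilᵀ * N + Pᵀ * Ntil - Ptilᵀ * Ntil)ᵀ) +
        (P - Ptil)ᵀ * Z * (P - Ptil) + (N - Ntil)ᵀ * Z⁻¹ * (N - Ntil))).PosDef) :
    (-(Φ + (Pᵀ * N + (Pᵀ * N)ᵀ))).PosDef :=
  convexified_implies_bmi_general n k Φ P Ptil N Ntil Z hZ hyp
end
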